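/- Fix γ > 0 and define δ*(ℓ;γ) = γ((ℓ−1)² − γ) / ((ℓ−1)((1+γ)(ℓ−1) + 2γ)) for ℓ > ℓ₁⁺(γ), and δ*(ℓ;γ) = (1 − 1/ℓ)²/(1 + 1/ℓ)² for 1 < ℓ ≤ ℓ₁⁺(γ). Then for every ℓ > 1, the optimal single-spike loss satisfies κ₁*(ℓ;γ) = (1 + sqrt(δ*(ℓ;γ)))/(1 − sqrt(δ*(ℓ;γ))). -/

import Mathlib

open Real Matrix

/-- Cosine `c(ℓ;γ)` from spiked covariance asymptotics. -/
noncomputable def cP (γ ℓ : ℝ) : ℝ :=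
  if 1 + Real.sqrt γ < ℓ then Real.sqrt ((1 - γ / (ℓ - 1) ^ 2) / (1 + γ / (ℓ - 1))) else 0

/-- Sine `s(ℓ;γ) = sqrt(1 - c²)`. -/
noncomputable def sP (γ ℓ : ℝ) : ℝ := Real.sqrt (1 - (cP γ ℓ) ^ 2)

/-- The 2×2 block `A(ℓ,η;γ)` of the asymptotic pivot. -/
noncomputable def Amat (γ ℓ η : ℝ) : Matrix (Fin 2) (Fin 2) ℝ :=
  !![(η * (cP γ ℓ) ^ 2 + (sP γ ℓ) ^ 2) / ℓ, (η - 1) * cP γ ℓ * sP γ ℓ / Real.sqrt ℓ;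
     (η - 1) * cP γ ℓ * sP γ ℓ / Real.sqrt ℓ, (cP γ ℓ) ^ 2 + η * (sP γ ℓ) ^ 2]

/-- Largest eigenvalue `ν₊(A(ℓ,η;γ))` (supremum of the real spectrum). -/
noncomputable def nuP (γ ℓ η : ℝ) : ℝ := sSup (spectrum ℝ (Amat γ ℓ η))

/-- Smallest eigenvalue `ν₋(A(ℓ,η;γ))` (infimum of the real spectrum). -/
noncomputable def nuM (γ ℓ η : ℝ) : ℝ := sInf (spectrum ℝ (Amat γ ℓ η))

/-- Threshold `ℓ₁⁺(γ) = 1 + (γ + sqrt(γ² + 8γ))/2`. -/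
noncomputable def ellOnePlus (γ : ℝ) : ℝ := 1 + (γ + Real.sqrt (γ ^ 2 + 8 * γ)) / 2

/-- Optimal single-spike shrinker `η₁*(ℓ;γ)`. -/
noncomputable def eta1star (γ ℓ : ℝ) : ℝ :=
  if ellOnePlus γ < ℓ then ℓ / (1 + γ + 2 * γ / (ℓ - 1)) else 1

/-- Optimal single-spike loss `κ₁*(ℓ;γ)`. -/
noncomputable def kappa1star (γ ℓ : ℝ) : ℝ :=
  nuP γ ℓ (eta1star γ ℓ) / nuM γ ℓ (eta1star γ ℓ)

/-- `a(ℓ;γ) = c²/ℓ + s²`. -/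
noncomputable def aP (γ ℓ : ℝ) : ℝ := (cP γ ℓ) ^ 2 / ℓ + (sP γ ℓ) ^ 2

/-- `b(ℓ;γ) = s²/ℓ + c²`. -/
noncomputable def bP (γ ℓ : ℝ) : ℝ := (sP γ ℓ) ^ 2 / ℓ + (cP γ ℓ) ^ 2

/-- Multi-spike condition-number objective `K_r((ℓᵢ),(ηᵢ);γ)`. -/
noncomputable def Kr (γ : ℝ) {r : ℕ} (ℓ η : Fin r → ℝ) : ℝ :=
  max 1 (⨆ i, nuP γ (ℓ i) (η i)) / min 1 (⨅ i, nuM γ (ℓ i) (η i))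

/-- `δ*(ℓ;γ)` from the closed-form expression for the optimal loss. -/
noncomputable def deltaStar (γ ℓ : ℝ) : ℝ :=
  if ellOnePlus γ < ℓ then
    γ * ((ℓ - 1) ^ 2 - γ) / ((ℓ - 1) * ((1 + γ) * (ℓ - 1) + 2 * γ))
  else (1 - 1 / ℓ) ^ 2 / (1 + 1 / ℓ) ^ 2

/- ### Auxiliary lemmas -/

lemma spec_two (a b d : ℝ) :
    spectrum ℝ (!![a, b; b, d]) =
      {(a + d + Real.sqrt ((a-d)^2 + 4*b^2))/2, (a + d - Real.sqrt ((a-d)^2 + 4*b^2))/2} := by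
  have hs : Real.sqrt ((a-d)^2 + 4*b^2) ^ 2 = (a-d)^2 + 4*b^2 :=
    Real.sq_sqrt (by positivity)
  ext μ
  rw [spectrum.mem_iff, Matrix.isUnit_iff_isUnit_det]
  have hdet : ((algebraMap ℝ (Matrix (Fin 2) (Fin 2) ℝ)) μ - !![a, b; b, d]).det
      = (μ - (a + d + Real.sqrt ((a-d)^2 + 4*b^2))/2) *
        (μ - (a + d - Real.sqrt ((a-d)^2 + 4*b^2))/2) := by
    rw [Matrix.det_fin_two]
    simp [Matrix.algebraMap_matrix_apply]
    nlinarith [hs]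
  rw [hdet, isUnit_iff_ne_zero]
  push_neg
  rw [mul_eq_zero, sub_eq_zero, sub_eq_zero]
  simp [Set.mem_insert_iff]

lemma sSup_spec_two (a b d : ℝ) :
    sSup (spectrum ℝ (!![a, b; b, d]))
      = (a + d + Real.sqrt ((a-d)^2 + 4*b^2))/2 := by
  rw [spec_two, csSup_pair]
  have h := Real.sqrt_nonneg ((a-d)^2 + 4*b^2)
  exact sup_eq_left.2 (by linarith)

lemma sInf_spec_two (a b d : ℝ) :
    sInf (spectrum ℝ (!![a, b; b, d]))
      = (a + d - Real.sqrt ((a-d)^2 + 4*b^2))/2 := by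
  rw [spec_two, csInf_pair]
  have h := Real.sqrt_nonneg ((a-d)^2 + 4*b^2)
  exact inf_eq_right.2 (by linarith)

lemma cP_sq_le_one (γ ℓ : ℝ) (hγ : 0 < γ) (hℓ : 1 < ℓ) : cP γ ℓ ^ 2 ≤ 1 := by
  unfold cP
  split_ifs with h
  · have hx : (0:ℝ) < ℓ - 1 := by linarith
    have hsg : Real.sqrt γ < ℓ - 1 := by linarith
    have hg2 : γ < (ℓ-1)^2 := by
      nlinarith [Real.sq_sqrt hγ.le, Real.sqrt_nonneg γ]
    have hnum : 0 ≤ 1 - γ/(ℓ-1)^2 := by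
      have : γ/(ℓ-1)^2 ≤ 1 := by
        rw [div_le_one (by positivity)]; linarith
      linarith
    have hden : (0:ℝ) < 1 + γ / (ℓ - 1) := by positivity
    rw [Real.sq_sqrt (div_nonneg hnum hden.le)]
    rw [div_le_one hden]
    have h1 : 0 ≤ γ/(ℓ-1)^2 := by positivity
    have h2 : 0 ≤ γ/(ℓ-1) := by positivity
    linarith
  · norm_num

lemma sP_sq (γ ℓ : ℝ) (hγ : 0 < γ) (hℓ : 1 < ℓ) : sP γ ℓ ^ 2 = 1 - cP γ ℓ ^ 2 :=
  Real.sq_sqrt (by linarith [cP_sq_le_one γ ℓ hγ hℓ])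

lemma cP_sq_eq (γ ℓ : ℝ) (hγ : 0 < γ) (h : 1 + Real.sqrt γ < ℓ) :
    cP γ ℓ ^ 2 = ((ℓ-1)^2 - γ)/((ℓ-1)*((ℓ-1)+γ)) := by
  have hx : (0:ℝ) < ℓ - 1 := lt_of_le_of_lt (Real.sqrt_nonneg γ) (by linarith)
  have hg2 : γ < (ℓ-1)^2 := by
    nlinarith [Real.sq_sqrt hγ.le, Real.sqrt_nonneg γ, h]
  unfold cP
  rw [if_pos h]
  have hnum : 0 ≤ 1 - γ/(ℓ-1)^2 := by
    have : γ/(ℓ-1)^2 ≤ 1 := by rw [div_le_one (by positivity)]; linarith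
    linarith
  have hden : (0:ℝ) < 1 + γ / (ℓ - 1) := by positivity
  rw [Real.sq_sqrt (div_nonneg hnum hden.le)]
  have h1 : (ℓ - 1) ≠ 0 := ne_of_gt hx
  have h2 : (ℓ - 1) + γ ≠ 0 := by positivity
  field_simp

lemma key_alg (γ x η c2 : ℝ) (hγ : 0 < γ) (hx : 0 < x)
    (hc2 : c2 = (x^2 - γ)/(x*(x+γ))) (hη : η = ((x+1)*x)/((1+γ)*x+2*γ)) :
    ((η*c2 + (1-c2))/(x+1) - (c2 + η*(1-c2)))^2 + 4*(η-1)^2*c2*(1-c2)/(x+1)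
      = (γ*(x^2-γ)/(x*((1+γ)*x+2*γ))) *
        ((η*c2+(1-c2))/(x+1) + (c2 + η*(1-c2)))^2 := by
  subst hc2 hη
  have h1 : x ≠ 0 := ne_of_gt hx
  have h2 : x + γ ≠ 0 := by positivity
  have h3 : (1+γ)*x + 2*γ ≠ 0 := by positivity
  have h4 : x + 1 ≠ 0 := by positivity
  field_simp
  ring

lemma mix_pos (η c : ℝ) (h0 : 0 < η) (h1 : 0 ≤ c) (h2 : c ≤ 1) :
    0 < η * c + (1 - c) := by
  rcases le_or_gt 1 η with h | h
  · nlinarith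
  · nlinarith

set_option maxHeartbeats 1000000 in
/-- closed-form expression for the optimal single-spike loss. -/
theorem stmt4 (γ : ℝ) (hγ : 0 < γ) :
    ∀ ℓ : ℝ, 1 < ℓ →
      kappa1star γ ℓ
        = (1 + Real.sqrt (deltaStar γ ℓ)) / (1 - Real.sqrt (deltaStar γ ℓ)) := by
  intro ℓ hℓ
  have hℓ0 : (0:ℝ) < ℓ := by linarith
  have hsum : cP γ ℓ ^ 2 + sP γ ℓ ^ 2 = 1 := by
    rw [sP_sq γ ℓ hγ hℓ]; ring
  by_cases hcase : ellOnePlus γ < ℓ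
  · -- supercritical case
    have hx : (0:ℝ) < ℓ - 1 := by linarith
    have hsub : 1 + Real.sqrt γ < ℓ := by
      have h8 : Real.sqrt (4*γ) ≤ Real.sqrt (γ^2 + 8*γ) := Real.sqrt_le_sqrt (by nlinarith)
      have h4 : Real.sqrt (4*γ) = 2 * Real.sqrt γ := by
        rw [show (4:ℝ)*γ = 2^2*γ by ring, Real.sqrt_mul (by positivity),
          Real.sqrt_sq (by norm_num)]
      have hc := hcase
      unfold ellOnePlus at hc
      nlinarith [Real.sqrt_nonneg γ]
    have hg2 : γ < (ℓ-1)^2 := by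
      nlinarith [Real.sq_sqrt hγ.le, Real.sqrt_nonneg γ, hsub]
    have hη : eta1star γ ℓ = ((ℓ-1+1)*(ℓ-1))/((1+γ)*(ℓ-1)+2*γ) := by
      unfold eta1star
      rw [if_pos hcase]
      have h1 : (ℓ - 1) ≠ 0 := ne_of_gt hx
      have h3 : (1+γ)*(ℓ-1) + 2*γ ≠ 0 := by positivity
      field_simp
      ring
    have hc2 : cP γ ℓ ^ 2 = ((ℓ-1)^2 - γ)/((ℓ-1)*((ℓ-1)+γ)) := cP_sq_eq γ ℓ hγ hsub
    have hδ : deltaStar γ ℓ = γ*((ℓ-1)^2-γ)/((ℓ-1)*((1+γ)*(ℓ-1)+2*γ)) := by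
      unfold deltaStar; rw [if_pos hcase]
    set η := eta1star γ ℓ with hηdef
    set C2 := cP γ ℓ ^ 2 with hC2def
    set δ := γ*((ℓ-1)^2-γ)/((ℓ-1)*((1+γ)*(ℓ-1)+2*γ)) with hδdef
    have hδ0 : 0 ≤ δ := by
      rw [hδdef]
      apply div_nonneg (by nlinarith) (by positivity)
    have hδ1 : δ < 1 := by
      rw [hδdef, div_lt_one (by positivity)]
      nlinarith
    have hS2 : sP γ ℓ ^ 2 = 1 - C2 := by rw [hC2def]; exact sP_sq γ ℓ hγ hℓ
    have hC2nonneg : 0 ≤ C2 := by rw [hC2def]; positivity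
    have hC2le : C2 ≤ 1 := by rw [hC2def]; exact cP_sq_le_one γ ℓ hγ hℓ
    have hηpos : 0 < η := by
      rw [hη]; apply div_pos (by nlinarith) (by positivity)
    set a := (η * cP γ ℓ ^ 2 + sP γ ℓ ^ 2) / ℓ with hadef
    set d := cP γ ℓ ^ 2 + η * sP γ ℓ ^ 2 with hddef
    have ha' : a = (η*C2 + (1-C2))/(ℓ-1+1) := by
      rw [hadef, hS2, ← hC2def]; ring
    have hd' : d = C2 + η*(1-C2) := by rw [hddef, hS2, ← hC2def]
    have hb2 : ((η - 1) * cP γ ℓ * sP γ ℓ / Real.sqrt ℓ)^2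
        = 4*(η-1)^2*C2*(1-C2)/(ℓ-1+1) / 4 := by
      rw [div_pow, mul_pow, mul_pow, Real.sq_sqrt hℓ0.le, ← hC2def, hS2]
      ring
    have hapos : 0 < a := by
      rw [ha']
      exact div_pos (mix_pos η C2 hηpos hC2nonneg hC2le) (by linarith)
    have hdpos : 0 < d := by
      rw [hd']
      have := mix_pos η (1 - C2) hηpos (by linarith) (by linarith)
      linarith
    have htpos : 0 < a + d := by linarith
    have hkey : (a - d)^2 + 4*((η - 1) * cP γ ℓ * sP γ ℓ / Real.sqrt ℓ)^2
        = δ * (a + d)^2 := by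
      rw [hb2, ha', hd', hδdef]
      have := key_alg γ (ℓ-1) η C2 hγ hx hc2 hη
      linarith
    have hsqrtD : Real.sqrt ((a - d)^2 + 4*((η - 1) * cP γ ℓ * sP γ ℓ / Real.sqrt ℓ)^2)
        = (a + d) * Real.sqrt δ := by
      rw [hkey, show δ * (a+d)^2 = (a+d)^2 * δ by ring,
        Real.sqrt_mul (sq_nonneg _), Real.sqrt_sq htpos.le]
    have hsδ1 : Real.sqrt δ < 1 := by
      rw [show (1:ℝ) = Real.sqrt 1 by simp]
      exact Real.sqrt_lt_sqrt hδ0 hδ1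
    have hsδ0 : 0 ≤ Real.sqrt δ := Real.sqrt_nonneg δ
    unfold kappa1star nuP nuM Amat
    rw [← hηdef, ← hadef, ← hddef, sSup_spec_two, sInf_spec_two, hsqrtD, hδ]
    have hden : 0 < (a + d - (a+d) * Real.sqrt δ)/2 := by nlinarith
    have hden2 : (0:ℝ) < 1 - Real.sqrt δ := by linarith
    rw [div_eq_div_iff (ne_of_gt hden) (ne_of_gt hden2)]
    ring
  · -- subcritical case: η = 1
    have hη : eta1star γ ℓ = 1 := by unfold eta1star; rw [if_neg hcase]
    have hδ : deltaStar γ ℓ = (1 - 1 / ℓ) ^ 2 / (1 + 1 / ℓ) ^ 2 := by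
      unfold deltaStar; rw [if_neg hcase]
    have hinv1 : 1/ℓ < 1 := by rw [div_lt_one hℓ0]; linarith
    have hinv0 : 0 < 1/ℓ := by positivity
    have hA : Amat γ ℓ (1:ℝ) = !![1/ℓ, 0; 0, 1] := by
      unfold Amat
      have e1 : (1 * cP γ ℓ ^ 2 + sP γ ℓ ^ 2) = 1 := by linarith
      have e2 : ((1:ℝ) - 1) * cP γ ℓ * sP γ ℓ / Real.sqrt ℓ = 0 := by norm_num
      have e3 : cP γ ℓ ^ 2 + 1 * sP γ ℓ ^ 2 = 1 := by linarith
      rw [e1, e2, e3]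
    unfold kappa1star nuP nuM
    rw [hη, hA, sSup_spec_two, sInf_spec_two]
    have hs : Real.sqrt ((1/ℓ - 1)^2 + 4*(0:ℝ)^2) = 1 - 1/ℓ := by
      rw [show (1/ℓ-1)^2 + 4*(0:ℝ)^2 = (1-1/ℓ)^2 by ring, Real.sqrt_sq (by linarith)]
    rw [hs, hδ]
    have hsd : Real.sqrt ((1 - 1/ℓ)^2/(1+1/ℓ)^2) = (1-1/ℓ)/(1+1/ℓ) := by
      rw [← div_pow, Real.sqrt_sq (div_nonneg (by linarith) (by positivity))]
    rw [hsd]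
    have hApos : (0:ℝ) < (1/ℓ + 1 - (1 - 1/ℓ))/2 := by linarith
    have hBpos : (0:ℝ) < 1 - (1-1/ℓ)/(1+1/ℓ) := by
      rw [sub_pos, div_lt_one (by positivity)]; linarith
    rw [div_eq_div_iff (ne_of_gt hApos) (ne_of_gt hBpos)]
    have h1 : (1:ℝ)+1/ℓ ≠ 0 := by positivity
    have h2 : (ℓ:ℝ) ≠ 0 := ne_of_gt hℓ0
    field_simp
    ring
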